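/- arXiv:1005.2951 — 7 statements merged into one kernel-verified Lean document; each statement's English description precedes it below -/
import Mathlib

section
/- For every positive integer k, I_{k,k} = (−1)ᵏ · k! · (q_{3k−1} e − p_{3k−1}), where I_{k,k} := ∫₀¹ xᵏ (1-x)ᵏ eˣ dx and p_n/q_n is the n-th convergent of the continued fraction [2; 1, 2, 1, 1, 4, 1, 1, 6, 1, ...]. -/
/-!
Following Cohn, put `J a b = ∫₀¹ xᵃ (x-1)ᵇ eˣ dx` and normalise the three integrals near the
diagonal: `A n = J n n / n!`, `B n = J (n+1) n / n!`, `C n = J n (n+1) / n!`. Integration by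
parts and `x = (x - 1) + 1` give `A (n+1) = -B n - C n`, `B (n+1) = -2(n+1) A (n+1) + C n` and
`C n = B n - A n`, which are exactly the three-term recurrences `r m = aₘ r (m-1) + r (m-2)` of
`r m = q m e - p m` along the period `1, 2k, 1` of the partial quotients. Comparing initial
values gives `A n = r (3n - 1)`, and `I_{k,k} = (-1)ᵏ k! A k`.
-/

open Real Nat intervalIntegral

namespace EContFrac

noncomputable def J (a b : ℕ) : ℝ := ∫ x in (0:ℝ)..1, x ^ a * (x - 1) ^ b * exp x

noncomputable def A (n : ℕ) : ℝ := J n n / n !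

noncomputable def B (n : ℕ) : ℝ := J (n + 1) n / n !

noncomputable def C (n : ℕ) : ℝ := J n (n + 1) / n !

theorem intervalIntegrable_integrand (a b : ℕ) :
    IntervalIntegrable (fun x : ℝ => x ^ a * (x - 1) ^ b * exp x) MeasureTheory.volume 0 1 :=
  (by fun_prop : Continuous fun x : ℝ => x ^ a * (x - 1) ^ b * exp x).intervalIntegrable _ _

theorem hasDerivAt_pow_mul_sub_one_pow_mul_exp (a b : ℕ) (x : ℝ) :
    HasDerivAt (fun y : ℝ => y ^ (a + 1) * (y - 1) ^ (b + 1) * exp y)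
      ((a + 1) * (x ^ a * (x - 1) ^ (b + 1) * exp x)
        + (b + 1) * (x ^ (a + 1) * (x - 1) ^ b * exp x)
        + x ^ (a + 1) * (x - 1) ^ (b + 1) * exp x) x := by
  refine ((((hasDerivAt_id' x).fun_pow (a + 1)).fun_mul
    (((hasDerivAt_id' x).sub_const 1).fun_pow (b + 1))).fun_mul (hasDerivAt_exp x)).congr_deriv ?_
  simp only [add_tsub_cancel_right]
  push_cast
  ring

/-- Integration by parts: the boundary term `x^(a+1) (x-1)^(b+1) eˣ` vanishes at `0` and `1`. -/
theorem J_succ_succ (a b : ℕ) :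
    J (a + 1) (b + 1) = -(a + 1) * J a (b + 1) - (b + 1) * J (a + 1) b := by
  have hI := intervalIntegrable_integrand
  have hftc := integral_eq_sub_of_hasDerivAt
    (fun x _ => hasDerivAt_pow_mul_sub_one_pow_mul_exp a b x)
    ((((hI _ _).const_mul _).add ((hI _ _).const_mul _)).add (hI _ _))
  rw [integral_add (((hI _ _).const_mul _).add ((hI _ _).const_mul _)) (hI _ _),
    integral_add ((hI _ _).const_mul _) ((hI _ _).const_mul _),
    integral_const_mul, integral_const_mul] at hftc
  norm_num at hftc
  simp only [J]
  linarith

theorem J_succ_left (a b : ℕ) : J (a + 1) b = J a (b + 1) + J a b := by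
  rw [J, J, J, ← integral_add (intervalIntegrable_integrand _ _) (intervalIntegrable_integrand _ _)]
  exact integral_congr fun x _ => by ring

theorem J_zero_zero : J 0 0 = exp 1 - 1 := by
  simp [J, integral_exp]

theorem J_one_zero : J 1 0 = 1 := by
  have hderiv (x : ℝ) : HasDerivAt (fun y : ℝ => (y - 1) * exp y) (x ^ 1 * (x - 1) ^ 0 * exp x) x := by
    refine (((hasDerivAt_id' x).sub_const 1).fun_mul (hasDerivAt_exp x)).congr_deriv ?_
    ring
  rw [J, integral_eq_sub_of_hasDerivAt (fun x _ => hderiv x) (intervalIntegrable_integrand 1 0)]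
  simp

theorem A_zero : A 0 = exp 1 - 1 := by
  simp [A, J_zero_zero]

theorem B_zero : B 0 = 1 := by
  simp [B, J_one_zero]

theorem C_eq (n : ℕ) : C n = B n - A n := by
  rw [C, B, A, J_succ_left]
  ring

theorem A_succ (n : ℕ) : A (n + 1) = -B n - C n := by
  have hn : (n ! : ℝ) ≠ 0 := by positivity
  rw [A, B, C, J_succ_succ, Nat.factorial_succ]
  push_cast
  field_simp
  ring

theorem B_succ (n : ℕ) : B (n + 1) = -2 * (n + 1) * A (n + 1) + C n := by
  have hn : (n ! : ℝ) ≠ 0 := by positivity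
  have hJ := J_succ_succ (n + 1) n
  rw [J_succ_left (n + 1) n, J_succ_succ n n] at hJ
  rw [B, A, C, Nat.factorial_succ, hJ, J_succ_succ]
  push_cast
  field_simp
  ring

theorem integral_pow_mul_one_sub_pow_mul_exp (k : ℕ) :
    ∫ x in (0:ℝ)..1, x ^ k * (1 - x) ^ k * exp x = (-1) ^ k * k ! * A k := by
  have hk : (k ! : ℝ) ≠ 0 := by positivity
  rw [A, mul_assoc, mul_div_cancel₀ _ hk, J, ← integral_const_mul]
  refine integral_congr fun x _ => ?_
  simp only [show 1 - x = -1 * (x - 1) by ring, mul_pow]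
  ring

/-- The recurrence `r n = aₙ r (n-1) + r (n-2)` of the convergents of `e = [2; 1, 2, 1, 1, 4, …]`
at the positions `n = 3m+3, 3m+4, 3m+5`, where `aₙ = 2(m+1), 1, 1`. -/
def ERecurrence {R : Type*} [CommSemiring R] (r : ℕ → R) : Prop :=
  ∀ m : ℕ, r (3 * m + 3) = (2 * m + 2) * r (3 * m + 2) + r (3 * m + 1) ∧
    r (3 * m + 4) = r (3 * m + 3) + r (3 * m + 2) ∧
    r (3 * m + 5) = r (3 * m + 4) + r (3 * m + 3)

theorem eRecurrence_of_partialQuotients {R : Type*} [CommSemiring R] {a : ℕ → ℕ} {r : ℕ → R}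
    (ha3 : ∀ k : ℕ, 1 ≤ k → a (3 * k) = 2 * k)
    (ha : ∀ k : ℕ, 1 ≤ k → a (3 * k - 1) = 1 ∧ a (3 * k + 1) = 1)
    (hr : ∀ n : ℕ, 3 ≤ n → r n = a n * r (n - 1) + r (n - 2)) : ERecurrence r := by
  intro m
  have a3 : a (3 * m + 3) = 2 * (m + 1) := ha3 (m + 1) (by omega)
  have a4 : a (3 * m + 4) = 1 := (ha (m + 1) (by omega)).2
  have a5 : a (3 * m + 5) = 1 := by
    simpa [show 3 * (m + 2) - 1 = 3 * m + 5 by omega] using (ha (m + 2) (by omega)).1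
  have h3 := hr (3 * m + 3) (by omega)
  have h4 := hr (3 * m + 4) (by omega)
  have h5 := hr (3 * m + 5) (by omega)
  simp only [a3, a4, a5, show 3 * m + 3 - 1 = 3 * m + 2 by omega,
    show 3 * m + 3 - 2 = 3 * m + 1 by omega, show 3 * m + 4 - 1 = 3 * m + 3 by omega,
    show 3 * m + 4 - 2 = 3 * m + 2 by omega, show 3 * m + 5 - 1 = 3 * m + 4 by omega,
    show 3 * m + 5 - 2 = 3 * m + 3 by omega, Nat.cast_one, one_mul] at h3 h4 h5
  refine ⟨?_, h4, h5⟩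
  rw [h3]
  push_cast
  ring

theorem A_succ_B_succ_eq_of_eRecurrence {r : ℕ → ℝ} (hr1 : r 1 = exp 1 - 2) (hr2 : r 2 = exp 1 - 3)
    (hrec : ERecurrence r) (n : ℕ) :
    A (n + 1) = r (3 * n + 2) ∧ B (n + 1) = -r (3 * n + 3) := by
  induction n with
  | zero =>
    have hA : A 1 = r 2 := by
      rw [A_succ, C_eq, A_zero, B_zero, hr2]
      ring
    refine ⟨hA, ?_⟩
    rw [B_succ, C_eq, hA, A_zero, B_zero, (hrec 0).1, hr1, hr2]
    norm_num
    ring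
  | succ n ih =>
    obtain ⟨hA, hB⟩ := ih
    obtain ⟨-, h4, h5⟩ := hrec n
    have hA' : A (n + 2) = r (3 * n + 5) := by
      rw [A_succ, C_eq, hA, hB, h5, h4]
      ring
    refine ⟨hA', ?_⟩
    have h6 := (hrec (n + 1)).1
    rw [show 3 * (n + 1) + 2 = 3 * n + 5 by ring, show 3 * (n + 1) + 1 = 3 * n + 4 by ring] at h6
    rw [B_succ, C_eq, hA, hB, hA', h6, h4]
    push_cast
    ring

end EContFrac

open EContFrac in
theorem stmt6_general (a : ℕ → ℕ) (p q : ℕ → ℤ)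
    (ha3 : ∀ k : ℕ, 1 ≤ k → a (3 * k) = 2 * k)
    (ha : ∀ k : ℕ, 1 ≤ k → a (3 * k - 1) = 1 ∧ a (3 * k + 1) = 1)
    (hp1 : p 1 = 2) (hp2 : p 2 = 3) (hq1 : q 1 = 1) (hq2 : q 2 = 1)
    (hrec : ∀ n : ℕ, 3 ≤ n →
      p n = a n * p (n - 1) + p (n - 2) ∧ q n = a n * q (n - 1) + q (n - 2))
    (k : ℕ) (hk : 1 ≤ k) :
    (∫ x in (0:ℝ)..1, x ^ k * (1 - x) ^ k * Real.exp x) =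
      (-1 : ℝ) ^ k * (Nat.factorial k) *
        ((q (3 * k - 1) : ℝ) * Real.exp 1 - (p (3 * k - 1) : ℝ)) := by
  set r : ℕ → ℝ := fun n => q n * exp 1 - p n with hr_def
  have hr : ∀ n : ℕ, 3 ≤ n → r n = a n * r (n - 1) + r (n - 2) := fun n hn => by
    simp only [hr_def, (hrec n hn).1, (hrec n hn).2]
    push_cast
    ring
  obtain ⟨m, rfl⟩ : ∃ m, k = m + 1 := ⟨k - 1, by omega⟩
  have hA := (A_succ_B_succ_eq_of_eRecurrence (by simp [r, hp1, hq1]) (by simp [r, hp2, hq2])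
    (eRecurrence_of_partialQuotients ha3 ha hr) m).1
  rw [integral_pow_mul_one_sub_pow_mul_exp, hA, show 3 * (m + 1) - 1 = 3 * m + 2 by omega]

theorem stmt6 (a : ℕ → ℕ) (p q : ℕ → ℤ)
    (ha1 : a 1 = 2)
    (ha3 : ∀ k : ℕ, 1 ≤ k → a (3 * k) = 2 * k)
    (ha : ∀ k : ℕ, 1 ≤ k → a (3 * k - 1) = 1 ∧ a (3 * k + 1) = 1)
    (hp1 : p 1 = 2) (hp2 : p 2 = 3) (hq1 : q 1 = 1) (hq2 : q 2 = 1)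
    (hrec : ∀ n : ℕ, 3 ≤ n →
      p n = a n * p (n - 1) + p (n - 2) ∧ q n = a n * q (n - 1) + q (n - 2))
    (k : ℕ) (hk : 1 ≤ k) :
    (∫ x in (0:ℝ)..1, x ^ k * (1 - x) ^ k * Real.exp x) =
      (-1 : ℝ) ^ k * (Nat.factorial k) *
        ((q (3 * k - 1) : ℝ) * Real.exp 1 - (p (3 * k - 1) : ℝ)) :=
  stmt6_general a p q ha3 ha hp1 hp2 hq1 hq2 hrec k hk
end

section
/- For every natural number k, I_{k,k+1} = (−1)ᵏ · k! · (q_{3k+1} e − p_{3k+1}), where I_{k,k+1} := ∫₀¹ xᵏ (1-x)^{k+1} eˣ dx and p_n/q_n is the n-th convergent of the continued fraction [2; 1, 2, 1, 1, 4, 1, ...]. -/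
/-!
Cohn's proof of the continued fraction of `e`. Differentiating `x^(m+1) (1-x)^(n+1) eˣ` and
splitting `(1-x)^(n+1) = (1-x)^n - x (1-x)^n` give linear relations between the integrals
`I m n = ∫₀¹ xᵐ (1-x)ⁿ eˣ dx`. Up to the factors `± k!`, `± (k+1)!`, the integrals `I k (k+1)`,
`I (k+1) (k+1)`, `I (k+2) (k+1)` are `rₙ = qₙ e - pₙ` for `n = 3k+1, 3k+2, 3k+3`, because these
relations are exactly `rₙ = aₙ rₙ₋₁ + rₙ₋₂` with the partial quotients `2k+2, 1, 1` of `e`.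
-/

open Real intervalIntegral Nat

noncomputable def expBetaIntegral (m n : ℕ) : ℝ :=
  ∫ x in (0:ℝ)..1, x ^ m * (1 - x) ^ n * exp x

lemma intervalIntegrable_pow_mul_one_sub_pow_mul_exp (m n : ℕ) :
    IntervalIntegrable (fun x : ℝ => x ^ m * (1 - x) ^ n * exp x) MeasureTheory.volume 0 1 :=
  Continuous.intervalIntegrable (by fun_prop) 0 1

lemma expBetaIntegral_succ_right (m n : ℕ) :
    expBetaIntegral m (n + 1) = expBetaIntegral m n - expBetaIntegral (m + 1) n := by
  rw [expBetaIntegral, expBetaIntegral, expBetaIntegral,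
    ← integral_sub (intervalIntegrable_pow_mul_one_sub_pow_mul_exp m n)
      (intervalIntegrable_pow_mul_one_sub_pow_mul_exp (m + 1) n)]
  exact integral_congr fun x _ => by ring

lemma hasDerivAt_pow_mul_one_sub_pow_mul_exp (m n : ℕ) (x : ℝ) :
    HasDerivAt (fun y => y ^ (m + 1) * (1 - y) ^ (n + 1) * exp y)
      ((m + 1) * (x ^ m * (1 - x) ^ (n + 1) * exp x)
        - (n + 1) * (x ^ (m + 1) * (1 - x) ^ n * exp x)
        + x ^ (m + 1) * (1 - x) ^ (n + 1) * exp x) x := by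
  have hx : HasDerivAt (fun y : ℝ => y ^ (m + 1)) ((m + 1) * x ^ m) x := by
    simpa using hasDerivAt_pow (m + 1) x
  have h1x : HasDerivAt (fun y : ℝ => (1 - y) ^ (n + 1)) ((n + 1) * (1 - x) ^ n * -1) x := by
    simpa using ((hasDerivAt_id x).const_sub 1).fun_pow (n + 1)
  exact ((hx.fun_mul h1x).fun_mul (hasDerivAt_exp x)).congr_deriv (by ring)

lemma expBetaIntegral_parts (m n : ℕ) :
    (m + 1) * expBetaIntegral m (n + 1) + expBetaIntegral (m + 1) (n + 1) =
      (n + 1) * expBetaIntegral (m + 1) n := by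
  have hFTC := integral_eq_sub_of_hasDerivAt
    (fun x _ => hasDerivAt_pow_mul_one_sub_pow_mul_exp m n x) (Continuous.intervalIntegrable
      (by fun_prop) 0 1)
  have hi := intervalIntegrable_pow_mul_one_sub_pow_mul_exp
  rw [integral_add (((hi m (n + 1)).const_mul _).sub ((hi (m + 1) n).const_mul _)) (hi _ _),
    integral_sub ((hi m (n + 1)).const_mul _) ((hi (m + 1) n).const_mul _),
    integral_const_mul, integral_const_mul] at hFTC
  simp only [one_pow, sub_self, zero_pow (succ_ne_zero _), mul_zero, zero_mul] at hFTC
  unfold expBetaIntegral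
  linarith

lemma expBetaIntegral_zero_zero : expBetaIntegral 0 0 = exp 1 - 1 := by
  simp [expBetaIntegral]

lemma expBetaIntegral_one_zero : expBetaIntegral 1 0 = 1 := by
  have h : ∀ x ∈ Set.uIcc (0:ℝ) 1,
      HasDerivAt (fun y => (y - 1) * exp y) (x ^ 1 * (1 - x) ^ 0 * exp x) x := fun x _ =>
    (((hasDerivAt_id' x).sub_const 1).fun_mul (hasDerivAt_exp x)).congr_deriv (by ring)
  rw [expBetaIntegral, integral_eq_sub_of_hasDerivAt h
    (intervalIntegrable_pow_mul_one_sub_pow_mul_exp 1 0)]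
  simp

lemma expBetaIntegral_add_two_add_one (k : ℕ) :
    expBetaIntegral (k + 2) (k + 1) =
      (k + 1) * (expBetaIntegral k (k + 1) - 2 * expBetaIntegral (k + 1) (k + 1)) := by
  have h₁ := expBetaIntegral_parts k k
  have h₂ := expBetaIntegral_parts (k + 1) k
  have h₃ := expBetaIntegral_succ_right (k + 1) k
  push_cast at h₂
  linear_combination h₂ + (k + 1) * h₃ - h₁

theorem expBetaIntegral_eq_of_recurrence (r : ℕ → ℝ) (hr₁ : r 1 = exp 1 - 2)
    (hr₂ : r 2 = exp 1 - 3)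
    (hr : ∀ k : ℕ, r (3 * k + 3) = 2 * (k + 1) * r (3 * k + 2) + r (3 * k + 1) ∧
      r (3 * k + 4) = r (3 * k + 3) + r (3 * k + 2) ∧
      r (3 * k + 5) = r (3 * k + 4) + r (3 * k + 3))
    (k : ℕ) :
    expBetaIntegral k (k + 1) = (-1) ^ k * k ! * r (3 * k + 1) ∧
      expBetaIntegral (k + 1) (k + 1) = (-1) ^ (k + 1) * (k + 1)! * r (3 * k + 2) := by
  induction k with
  | zero =>
    have h₀₁ : expBetaIntegral 0 1 = exp 1 - 2 := by
      rw [expBetaIntegral_succ_right, expBetaIntegral_zero_zero, expBetaIntegral_one_zero]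
      ring
    have h₁₁ := expBetaIntegral_parts 0 0
    rw [expBetaIntegral_one_zero, h₀₁] at h₁₁
    push_cast at h₁₁
    constructor
    · simp [h₀₁, hr₁]
    · simp only [zero_add, mul_zero, hr₂, factorial_one, cast_one]
      linear_combination h₁₁
  | succ k ih =>
    obtain ⟨hk₁, hk₂⟩ := ih
    obtain ⟨hr₃, hr₄, hr₅⟩ := hr k
    have hF : ((k + 1)! : ℝ) = (k + 1) * k ! := by push_cast [factorial_succ]; ring
    have h₂₁ : expBetaIntegral (k + 2) (k + 1) = (-1) ^ k * (k + 1)! * r (3 * k + 3) := by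
      rw [expBetaIntegral_add_two_add_one, hk₁, hk₂, hr₃, hF]
      ring
    have h₁₂ : expBetaIntegral (k + 1) (k + 2) = (-1) ^ (k + 1) * (k + 1)! * r (3 * k + 4) := by
      rw [expBetaIntegral_succ_right, hk₂, h₂₁, hr₄]
      ring
    have h₂₂ : expBetaIntegral (k + 2) (k + 2) = (-1) ^ (k + 2) * (k + 2)! * r (3 * k + 5) := by
      have := expBetaIntegral_parts (k + 1) (k + 1)
      rw [h₁₂, h₂₁] at this
      rw [hr₅, factorial_succ (k + 1)]
      push_cast at this ⊢
      linear_combination this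
    rw [show 3 * (k + 1) + 1 = 3 * k + 4 by ring, show 3 * (k + 1) + 2 = 3 * k + 5 by ring]
    exact ⟨h₁₂, h₂₂⟩

lemma eCF_three_step_recurrence (a : ℕ → ℕ) (r : ℕ → ℝ)
    (ha3 : ∀ k : ℕ, 1 ≤ k → a (3 * k) = 2 * k)
    (ha : ∀ k : ℕ, 1 ≤ k → a (3 * k - 1) = 1 ∧ a (3 * k + 1) = 1)
    (hrec : ∀ n : ℕ, 3 ≤ n → r n = a n * r (n - 1) + r (n - 2)) (k : ℕ) :
    r (3 * k + 3) = 2 * (k + 1) * r (3 * k + 2) + r (3 * k + 1) ∧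
      r (3 * k + 4) = r (3 * k + 3) + r (3 * k + 2) ∧
      r (3 * k + 5) = r (3 * k + 4) + r (3 * k + 3) := by
  have step (n : ℕ) : r (n + 3) = a (n + 3) * r (n + 2) + r (n + 1) := by
    simpa using hrec (n + 3) (by omega)
  have a₃ : a (3 * k + 3) = 2 * (k + 1) := ha3 (k + 1) (by omega)
  have a₄ : a (3 * k + 4) = 1 := (ha (k + 1) (by omega)).2
  have a₅ : a (3 * k + 5) = 1 := (ha (k + 2) (by omega)).1
  refine ⟨?_, ?_, ?_⟩
  · simpa [a₃] using step (3 * k)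
  · simpa [a₄] using step (3 * k + 1)
  · simpa [a₅] using step (3 * k + 2)

theorem stmt7_general (a : ℕ → ℕ) (p q : ℕ → ℤ)
    (ha3 : ∀ k : ℕ, 1 ≤ k → a (3 * k) = 2 * k)
    (ha : ∀ k : ℕ, 1 ≤ k → a (3 * k - 1) = 1 ∧ a (3 * k + 1) = 1)
    (hp1 : p 1 = 2) (hp2 : p 2 = 3) (hq1 : q 1 = 1) (hq2 : q 2 = 1)
    (hrec : ∀ n : ℕ, 3 ≤ n →
      p n = a n * p (n - 1) + p (n - 2) ∧ q n = a n * q (n - 1) + q (n - 2))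
    (k : ℕ) :
    (∫ x in (0:ℝ)..1, x ^ k * (1 - x) ^ (k + 1) * Real.exp x) =
      (-1 : ℝ) ^ k * (Nat.factorial k) *
        ((q (3 * k + 1) : ℝ) * Real.exp 1 - (p (3 * k + 1) : ℝ)) := by
  set r : ℕ → ℝ := fun n => q n * exp 1 - p n
  have hr_rec (n : ℕ) (hn : 3 ≤ n) : r n = a n * r (n - 1) + r (n - 2) := by
    obtain ⟨hp, hq⟩ := hrec n hn
    simp only [r, hp, hq]
    push_cast
    ring
  exact (expBetaIntegral_eq_of_recurrence r (by simp [r, hp1, hq1]) (by simp [r, hp2, hq2])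
    (eCF_three_step_recurrence a r ha3 ha hr_rec) k).1

theorem stmt7 (a : ℕ → ℕ) (p q : ℕ → ℤ)
    (ha1 : a 1 = 2)
    (ha3 : ∀ k : ℕ, 1 ≤ k → a (3 * k) = 2 * k)
    (ha : ∀ k : ℕ, 1 ≤ k → a (3 * k - 1) = 1 ∧ a (3 * k + 1) = 1)
    (hp1 : p 1 = 2) (hp2 : p 2 = 3) (hq1 : q 1 = 1) (hq2 : q 2 = 1)
    (hrec : ∀ n : ℕ, 3 ≤ n →
      p n = a n * p (n - 1) + p (n - 2) ∧ q n = a n * q (n - 1) + q (n - 2))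
    (k : ℕ) :
    (∫ x in (0:ℝ)..1, x ^ k * (1 - x) ^ (k + 1) * Real.exp x) =
      (-1 : ℝ) ^ k * (Nat.factorial k) *
        ((q (3 * k + 1) : ℝ) * Real.exp 1 - (p (3 * k + 1) : ℝ)) :=
  stmt7_general a p q ha3 ha hp1 hp2 hq1 hq2 hrec k
end

section
/- For every positive integer k, |e − p_{3k−1}/q_{3k−1}| ≤ e / (4ᵏ · k!), where p_n/q_n is the n-th convergent of the continued fraction [2; 1, 2, 1, 1, 4, 1, ...]. -/
/-!
Hermite's integrals `J m n = ∫₀¹ xᵐ (x - 1)ⁿ eˣ dx` satisfy, by integration by parts, linear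
recurrences that match the recurrence of the convergents of `e = [2; 1, 2, 1, 1, 4, 1, …]` over
each period `1, 1, 2k`. Hence `J k k = k! (q_{3k-1} e - p_{3k-1})`. Since `|x (x - 1)| ≤ 1/4` on
`[0, 1]`, `|J k k| ≤ e / 4ᵏ`, and dividing by `k! q_{3k-1} ≥ k!` gives the bound.
-/

open Real intervalIntegral

noncomputable def hermiteIntegrand (m n : ℕ) (x : ℝ) : ℝ := x ^ m * (x - 1) ^ n * exp x

noncomputable def hermiteIntegral (m n : ℕ) : ℝ := ∫ x in (0 : ℝ)..1, hermiteIntegrand m n x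

lemma intervalIntegrable_hermiteIntegrand (m n : ℕ) :
    IntervalIntegrable (hermiteIntegrand m n) MeasureTheory.volume 0 1 :=
  Continuous.intervalIntegrable (by unfold hermiteIntegrand; fun_prop) _ _

lemma hermiteIntegral_succ_right (m n : ℕ) :
    hermiteIntegral m (n + 1) = hermiteIntegral (m + 1) n - hermiteIntegral m n := by
  unfold hermiteIntegral
  rw [← integral_sub (intervalIntegrable_hermiteIntegrand _ _)
    (intervalIntegrable_hermiteIntegrand _ _)]
  congr 1 with x
  simp only [hermiteIntegrand]
  ring

/-- Integration by parts: `x ^ (m + 1) * (x - 1) ^ (n + 1) * exp x` vanishes at `0` and `1`. -/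
lemma hermiteIntegral_succ_succ (m n : ℕ) :
    hermiteIntegral (m + 1) (n + 1) =
      -((m + 1) * hermiteIntegral m (n + 1) + (n + 1) * hermiteIntegral (m + 1) n) := by
  have hderiv : ∀ x ∈ Set.uIcc (0 : ℝ) 1, HasDerivAt (hermiteIntegrand (m + 1) (n + 1))
      ((m + 1) * hermiteIntegrand m (n + 1) x + (n + 1) * hermiteIntegrand (m + 1) n x
        + hermiteIntegrand (m + 1) (n + 1) x) x := by
    intro x _
    have hpow : HasDerivAt (fun x : ℝ => x ^ (m + 1)) ((m + 1) * x ^ m) x := by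
      simpa using hasDerivAt_pow (m + 1) x
    have hshift : HasDerivAt (fun x : ℝ => (x - 1) ^ (n + 1)) ((n + 1) * (x - 1) ^ n) x := by
      simpa using ((hasDerivAt_id x).sub_const 1).fun_pow (n + 1)
    exact ((hpow.mul hshift).mul (hasDerivAt_exp x)).congr_deriv
      (by simp only [hermiteIntegrand, Pi.mul_apply]; ring)
  have hint := intervalIntegrable_hermiteIntegrand
  have hftc := integral_eq_sub_of_hasDerivAt hderiv
    ((((hint _ _).const_mul _).add ((hint _ _).const_mul _)).add (hint _ _))
  rw [integral_add (((hint _ _).const_mul _).add ((hint _ _).const_mul _)) (hint _ _),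
    integral_add ((hint _ _).const_mul _) ((hint _ _).const_mul _),
    integral_const_mul, integral_const_mul] at hftc
  simp only [hermiteIntegrand] at hftc
  unfold hermiteIntegral hermiteIntegrand
  linear_combination hftc

lemma hermiteIntegral_zero_zero : hermiteIntegral 0 0 = exp 1 - 1 := by
  simp [hermiteIntegral, hermiteIntegrand]

lemma hermiteIntegral_one_zero : hermiteIntegral 1 0 = 1 := by
  have hderiv : ∀ x ∈ Set.uIcc (0 : ℝ) 1,
      HasDerivAt (fun x => (x - 1) * exp x) (hermiteIntegrand 1 0 x) x := fun x _ =>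
    (((hasDerivAt_id x).sub_const 1).mul (hasDerivAt_exp x)).congr_deriv
      (by simp [hermiteIntegrand]; ring)
  rw [hermiteIntegral, integral_eq_sub_of_hasDerivAt hderiv
    (intervalIntegrable_hermiteIntegrand 1 0)]
  simp

lemma hermiteIntegral_one_one : hermiteIntegral 1 1 = exp 1 - 3 := by
  have hparts := hermiteIntegral_succ_succ 0 0
  have hshift := hermiteIntegral_succ_right 0 0
  norm_num [hermiteIntegral_zero_zero, hermiteIntegral_one_zero] at hparts hshift
  linarith

lemma hermiteIntegral_two_one : hermiteIntegral 2 1 = 8 - 3 * exp 1 := by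
  have hparts := hermiteIntegral_succ_succ 1 0
  have hshift := hermiteIntegral_succ_right 1 0
  norm_num [hermiteIntegral_one_one, hermiteIntegral_one_zero] at hparts hshift
  linarith

lemma hermiteIntegral_diag_succ (n : ℕ) :
    hermiteIntegral (n + 2) (n + 2) =
      (n + 2) * (hermiteIntegral (n + 1) (n + 1) - 2 * hermiteIntegral (n + 2) (n + 1)) := by
  rw [hermiteIntegral_succ_succ (n + 1) (n + 1), hermiteIntegral_succ_right (n + 1) (n + 1)]
  push_cast
  ring

lemma hermiteIntegral_succ_diag_succ (n : ℕ) :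
    hermiteIntegral (n + 3) (n + 2) =
      -((2 * n + 5) * hermiteIntegral (n + 2) (n + 2))
        - (n + 2) * hermiteIntegral (n + 2) (n + 1) := by
  have hleft : hermiteIntegral (n + 3) (n + 1) =
      hermiteIntegral (n + 2) (n + 2) + hermiteIntegral (n + 2) (n + 1) := by
    linarith [hermiteIntegral_succ_right (n + 2) (n + 1)]
  rw [hermiteIntegral_succ_succ (n + 2) (n + 1), hleft]
  push_cast
  ring

/-- On `[0, 1]`, `|x (x - 1)| ≤ 1 / 4` and `exp x ≤ e`. -/
lemma abs_hermiteIntegral_diag_le (n : ℕ) : |hermiteIntegral n n| ≤ exp 1 / 4 ^ n := by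
  have hbound : ∀ x ∈ Set.uIoc (0 : ℝ) 1, ‖hermiteIntegrand n n x‖ ≤ exp 1 / 4 ^ n := by
    rintro x ⟨hx0, hx1⟩
    simp only [min_eq_left zero_le_one, max_eq_right zero_le_one] at hx0 hx1
    have hquad : |x * (x - 1)| ≤ 1 / 4 := by
      rw [abs_le]; constructor <;> nlinarith [sq_nonneg (x - 1 / 2)]
    rw [hermiteIntegrand, Real.norm_eq_abs, abs_mul, abs_exp, ← mul_pow, abs_pow]
    calc |x * (x - 1)| ^ n * exp x ≤ (1 / 4) ^ n * exp 1 := by gcongr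
      _ = exp 1 / 4 ^ n := by rw [one_div_pow, one_div_mul_eq_div]
  simpa [hermiteIntegral] using norm_integral_le_of_norm_le_const hbound

section ContinuedFraction

variable {R : Type*} [CommRing R] (a : ℕ → ℕ)

/-- The recurrence over one period `1, 1, 2 (m + 2)` of the partial quotients. -/
lemma recurrence_period (ha3 : ∀ k : ℕ, 1 ≤ k → a (3 * k) = 2 * k)
    (ha : ∀ k : ℕ, 1 ≤ k → a (3 * k - 1) = 1 ∧ a (3 * k + 1) = 1) (s : ℕ → R)
    (hrec : ∀ n : ℕ, 3 ≤ n → s n = a n * s (n - 1) + s (n - 2)) (m : ℕ) :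
    s (3 * m + 5) = 2 * s (3 * m + 3) + s (3 * m + 2) ∧
      s (3 * m + 6) = (2 * m + 5) * s (3 * m + 5) - s (3 * m + 3) := by
  have h4 := hrec (3 * m + 4) (by omega)
  have h5 := hrec (3 * m + 5) (by omega)
  have h6 := hrec (3 * m + 6) (by omega)
  have ha4 : a (3 * m + 4) = 1 := (ha (m + 1) (by omega)).2
  have ha5 : a (3 * m + 5) = 1 := (ha (m + 2) (by omega)).1
  have ha6 : a (3 * m + 6) = 2 * (m + 2) := ha3 (m + 2) (by omega)
  simp only [show 3 * m + 4 - 1 = 3 * m + 3 by omega, show 3 * m + 4 - 2 = 3 * m + 2 by omega,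
    show 3 * m + 5 - 1 = 3 * m + 4 by omega, show 3 * m + 5 - 2 = 3 * m + 3 by omega,
    show 3 * m + 6 - 1 = 3 * m + 5 by omega, show 3 * m + 6 - 2 = 3 * m + 4 by omega,
    ha4, ha5, ha6] at h4 h5 h6
  push_cast at h4 h5 h6
  constructor
  · rw [h5, h4]; ring
  · linear_combination h6 - h5

lemma one_le_of_recurrence (q : ℕ → ℤ) (hq1 : q 1 = 1) (hq2 : q 2 = 1)
    (hrec : ∀ n : ℕ, 3 ≤ n → q n = a n * q (n - 1) + q (n - 2)) :
    ∀ n : ℕ, 1 ≤ n → 1 ≤ q n := by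
  intro n
  induction n using Nat.strong_induction_on with
  | _ n ih =>
    intro hn
    rcases Nat.lt_or_ge n 3 with h3 | h3
    · interval_cases n <;> simp [hq1, hq2]
    · have hq := ih (n - 1) (by omega) (by omega)
      have : (0 : ℤ) ≤ a n * q (n - 1) := by positivity
      linarith [hrec n h3, ih (n - 2) (by omega) (by omega)]

end ContinuedFraction

lemma hermiteIntegral_eq_factorial_mul (r : ℕ → ℝ) (hr2 : r 2 = exp 1 - 3)
    (hr3 : r 3 = 3 * exp 1 - 8)
    (hperiod : ∀ m : ℕ, r (3 * m + 5) = 2 * r (3 * m + 3) + r (3 * m + 2) ∧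
      r (3 * m + 6) = (2 * m + 5) * r (3 * m + 5) - r (3 * m + 3)) (n : ℕ) :
    hermiteIntegral (n + 1) (n + 1) = (n + 1).factorial * r (3 * n + 2) ∧
      hermiteIntegral (n + 2) (n + 1) = -((n + 1).factorial * r (3 * n + 3)) := by
  induction n with
  | zero =>
    norm_num [hermiteIntegral_one_one, hermiteIntegral_two_one, hr2, hr3]
  | succ n ih =>
    obtain ⟨hdiag, hsub⟩ := ih
    obtain ⟨h5, h6⟩ := hperiod n
    have hfact : ((n + 2).factorial : ℝ) = (n + 2) * (n + 1).factorial := by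
      push_cast [Nat.factorial_succ]; ring
    rw [show 3 * (n + 1) + 2 = 3 * n + 5 by ring, show 3 * (n + 1) + 3 = 3 * n + 6 by ring,
      hermiteIntegral_succ_diag_succ, hermiteIntegral_diag_succ, hdiag, hsub, hfact, h6, h5]
    constructor <;> ring

lemma abs_exp_sub_div_le_of_hermiteIntegral_eq (n : ℕ) (u v : ℝ) (hv : 1 ≤ v)
    (hJ : hermiteIntegral n n = n.factorial * (v * exp 1 - u)) :
    |exp 1 - u / v| ≤ exp 1 / (4 ^ n * n.factorial) := by
  have hfact : (0 : ℝ) < n.factorial := by positivity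
  have hvpos : (0 : ℝ) < v := by linarith
  have herror : exp 1 - u / v = hermiteIntegral n n / (n.factorial * v) := by
    rw [hJ]; field_simp
  rw [herror, abs_div, abs_of_pos (mul_pos hfact hvpos),
    div_le_div_iff₀ (by positivity) (by positivity)]
  calc |hermiteIntegral n n| * (4 ^ n * n.factorial)
      ≤ exp 1 / 4 ^ n * (4 ^ n * n.factorial) := by
        gcongr; exact abs_hermiteIntegral_diag_le n
    _ = exp 1 * n.factorial := by field_simp
    _ ≤ exp 1 * (n.factorial * v) := by
        gcongr; exact le_mul_of_one_le_right hfact.le hv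

theorem stmt9_general (a : ℕ → ℕ) (p q : ℕ → ℤ)
    (ha3 : ∀ k : ℕ, 1 ≤ k → a (3 * k) = 2 * k)
    (ha : ∀ k : ℕ, 1 ≤ k → a (3 * k - 1) = 1 ∧ a (3 * k + 1) = 1)
    (hp1 : p 1 = 2) (hp2 : p 2 = 3) (hq1 : q 1 = 1) (hq2 : q 2 = 1)
    (hrec : ∀ n : ℕ, 3 ≤ n →
      p n = a n * p (n - 1) + p (n - 2) ∧ q n = a n * q (n - 1) + q (n - 2))
    (k : ℕ) (hk : 1 ≤ k) :
    |Real.exp 1 - (p (3 * k - 1) : ℝ) / (q (3 * k - 1) : ℝ)| ≤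
      Real.exp 1 / (4 ^ k * Nat.factorial k) := by
  set r : ℕ → ℝ := fun n => q n * exp 1 - p n with hr
  have hrec_r : ∀ n : ℕ, 3 ≤ n → r n = a n * r (n - 1) + r (n - 2) := fun n hn => by
    simp only [hr, (hrec n hn).1, (hrec n hn).2]; push_cast; ring
  have hr3 : r 3 = 3 * exp 1 - 8 := by
    rw [hrec_r 3 le_rfl, ha3 1 le_rfl]; simp [hr, hp1, hp2, hq1, hq2]; ring
  obtain ⟨m, rfl⟩ : ∃ m, k = m + 1 := ⟨k - 1, by omega⟩
  have hJ := (hermiteIntegral_eq_factorial_mul r (by simp [hr, hp2, hq2]) hr3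
    (recurrence_period a ha3 ha r hrec_r) m).1
  have hq : (1 : ℝ) ≤ q (3 * m + 2) := by
    exact_mod_cast one_le_of_recurrence a q hq1 hq2 (fun n hn => (hrec n hn).2) _ (by omega)
  rw [show 3 * (m + 1) - 1 = 3 * m + 2 by omega]
  exact abs_exp_sub_div_le_of_hermiteIntegral_eq (m + 1) _ _ hq hJ

theorem stmt9 (a : ℕ → ℕ) (p q : ℕ → ℤ)
    (ha1 : a 1 = 2)
    (ha3 : ∀ k : ℕ, 1 ≤ k → a (3 * k) = 2 * k)
    (ha : ∀ k : ℕ, 1 ≤ k → a (3 * k - 1) = 1 ∧ a (3 * k + 1) = 1)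
    (hp1 : p 1 = 2) (hp2 : p 2 = 3) (hq1 : q 1 = 1) (hq2 : q 2 = 1)
    (hrec : ∀ n : ℕ, 3 ≤ n →
      p n = a n * p (n - 1) + p (n - 2) ∧ q n = a n * q (n - 1) + q (n - 2))
    (k : ℕ) (hk : 1 ≤ k) :
    |Real.exp 1 - (p (3 * k - 1) : ℝ) / (q (3 * k - 1) : ℝ)| ≤
      Real.exp 1 / (4 ^ k * Nat.factorial k) :=
  stmt9_general a p q ha3 ha hp1 hp2 hq1 hq2 hrec k hk
end

section
/- For sequences p_n, q_n defined by the continued-fraction recurrences with partial quotients a_1 = 2, a_{3k} = 2k, a_{3k±1} = 1 (k ≥ 1), one has p_{3k+4} = (2k+3) p_{3k} + (2k+4) p_{3k+1} and q_{3k+4} = (2k+3) q_{3k} + (2k+4) q_{3k+1} for all k ≥ 1. -/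
/-! Only the partial quotients `a (3k+2) = 1`, `a (3k+3) = 2k+2`, `a (3k+4) = 1` matter:
unrolling the recurrence three times expresses `x (3k+4)` through `x (3k)` and `x (3k+1)`,
by the same computation for `p` and for `q`. -/

section ContinuantRecurrence

variable (a : ℕ → ℕ) (x : ℕ → ℤ)

lemma continuant_add_two (hrec : ∀ n : ℕ, 3 ≤ n → x n = a n * x (n - 1) + x (n - 2))
    {n : ℕ} (hn : 1 ≤ n) : x (n + 2) = a (n + 2) * x (n + 1) + x n := by
  simpa using hrec (n + 2) (by omega)

lemma continuant_three_step (hrec : ∀ n : ℕ, 3 ≤ n → x n = a n * x (n - 1) + x (n - 2))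
    {k : ℕ} (hk : 1 ≤ k) (h2 : a (3 * k + 2) = 1) (h3 : a (3 * k + 3) = 2 * k + 2)
    (h4 : a (3 * k + 4) = 1) :
    x (3 * k + 4) = (2 * k + 3) * x (3 * k) + (2 * k + 4) * x (3 * k + 1) := by
  have r2 := continuant_add_two a x hrec (n := 3 * k) (by omega)
  have r3 := continuant_add_two a x hrec (n := 3 * k + 1) (by omega)
  have r4 := continuant_add_two a x hrec (n := 3 * k + 2) (by omega)
  rw [h2] at r2
  rw [h3] at r3
  rw [h4] at r4
  push_cast at r2 r3 r4
  linear_combination r4 + r3 + (2 * k + 3 : ℤ) * r2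

end ContinuantRecurrence

theorem stmt11_general (a : ℕ → ℕ) (p q : ℕ → ℤ)
    (ha3 : ∀ k : ℕ, 1 ≤ k → a (3 * k) = 2 * k)
    (ha : ∀ k : ℕ, 1 ≤ k → a (3 * k - 1) = 1 ∧ a (3 * k + 1) = 1)
    (hrec : ∀ n : ℕ, 3 ≤ n →
      p n = a n * p (n - 1) + p (n - 2) ∧ q n = a n * q (n - 1) + q (n - 2))
    (k : ℕ) (hk : 1 ≤ k) :
    p (3 * k + 4) = (2 * k + 3) * p (3 * k) + (2 * k + 4) * p (3 * k + 1) ∧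
    q (3 * k + 4) = (2 * k + 3) * q (3 * k) + (2 * k + 4) * q (3 * k + 1) := by
  obtain ⟨h2, h4⟩ := ha (k + 1) (by omega)
  have h3 := ha3 (k + 1) (by omega)
  rw [show 3 * (k + 1) - 1 = 3 * k + 2 by omega] at h2
  rw [show 3 * (k + 1) + 1 = 3 * k + 4 by omega] at h4
  rw [show 3 * (k + 1) = 3 * k + 3 by omega, mul_add, mul_one] at h3
  exact ⟨continuant_three_step a p (fun n hn => (hrec n hn).1) hk h2 h3 h4,
    continuant_three_step a q (fun n hn => (hrec n hn).2) hk h2 h3 h4⟩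

theorem stmt11 (a : ℕ → ℕ) (p q : ℕ → ℤ)
    (ha1 : a 1 = 2)
    (ha3 : ∀ k : ℕ, 1 ≤ k → a (3 * k) = 2 * k)
    (ha : ∀ k : ℕ, 1 ≤ k → a (3 * k - 1) = 1 ∧ a (3 * k + 1) = 1)
    (hp1 : p 1 = 2) (hp2 : p 2 = 3) (hq1 : q 1 = 1) (hq2 : q 2 = 1)
    (hrec : ∀ n : ℕ, 3 ≤ n →
      p n = a n * p (n - 1) + p (n - 2) ∧ q n = a n * q (n - 1) + q (n - 2))
    (k : ℕ) (hk : 1 ≤ k) :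
    p (3 * k + 4) = (2 * k + 3) * p (3 * k) + (2 * k + 4) * p (3 * k + 1) ∧
    q (3 * k + 4) = (2 * k + 3) * q (3 * k) + (2 * k + 4) * q (3 * k + 1) :=
  stmt11_general a p q ha3 ha hrec k hk
end

section
/- For every positive integer k, q_{3k−1} · e − p_{3k−1} has the same sign as (−1)ᵏ, where p_n/q_n is the n-th convergent of the continued fraction [2; 1, 2, 1, 1, 4, 1, ...]. -/
/-!
Cohn's proof of the continued fraction of `e`. The integrals
`J m k = ∫₀¹ xᵐ (x - 1)ᵏ eˣ dx` satisfy two linear relations: `J (m+1) k = J m (k+1) + J m k`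
since `x = (x - 1) + 1`, and an integration by parts whose boundary terms vanish at `0` and `1`.
After normalising `A n = J n n / n!` and `C n = J n (n+1) / n!`, these relations are exactly the
continued-fraction recurrence for the partial quotients `1, 2n, 1`, so by induction
`A k = q (3k-1) e - p (3k-1)`. The integrand of `(-1)ᵏ A k` is positive on `(0, 1)`.
-/

open intervalIntegral Real Nat

noncomputable def cohnIntegral (m k : ℕ) : ℝ :=
  ∫ x in (0 : ℝ)..1, x ^ m * (x - 1) ^ k * exp x

theorem cohnIntegral.intervalIntegrable (m k : ℕ) :
    IntervalIntegrable (fun x : ℝ => x ^ m * (x - 1) ^ k * exp x) MeasureTheory.volume 0 1 :=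
  (by fun_prop : Continuous fun x : ℝ => x ^ m * (x - 1) ^ k * exp x).intervalIntegrable 0 1

theorem cohnIntegral_succ_left (m k : ℕ) :
    cohnIntegral (m + 1) k = cohnIntegral m (k + 1) + cohnIntegral m k := by
  rw [cohnIntegral, cohnIntegral, cohnIntegral,
    ← integral_add (cohnIntegral.intervalIntegrable _ _) (cohnIntegral.intervalIntegrable _ _)]
  exact integral_congr fun x _ => by ring

theorem cohnIntegral_succ_succ (m k : ℕ) :
    cohnIntegral (m + 1) (k + 1) =
      -((m + 1) * cohnIntegral m (k + 1) + (k + 1) * cohnIntegral (m + 1) k) := by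
  have hderiv (x : ℝ) : HasDerivAt (fun y => y ^ (m + 1) * (y - 1) ^ (k + 1) * exp y)
      ((m + 1) * (x ^ m * (x - 1) ^ (k + 1) * exp x) + (k + 1) * (x ^ (m + 1) * (x - 1) ^ k * exp x)
        + x ^ (m + 1) * (x - 1) ^ (k + 1) * exp x) x := by
    refine (((hasDerivAt_pow (m + 1) x).fun_mul (((hasDerivAt_id x).sub_const 1).fun_pow
      (k + 1))).fun_mul (hasDerivAt_exp x)).congr_deriv ?_
    simp only [id, add_tsub_cancel_right, cast_add, cast_one]
    ring
  have hI := cohnIntegral.intervalIntegrable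
  have hparts := integral_eq_sub_of_hasDerivAt (fun x _ => hderiv x)
    ((((hI _ _).const_mul _).add ((hI _ _).const_mul _)).add (hI _ _))
  rw [integral_add (((hI _ _).const_mul _).add ((hI _ _).const_mul _)) (hI _ _),
    integral_add ((hI _ _).const_mul _) ((hI _ _).const_mul _), integral_const_mul,
    integral_const_mul] at hparts
  simp only [cohnIntegral]
  norm_num at hparts
  linarith

theorem cohnIntegral_zero_zero : cohnIntegral 0 0 = exp 1 - 1 := by
  simp [cohnIntegral, integral_exp]

theorem cohnIntegral_zero_one : cohnIntegral 0 1 = 2 - exp 1 := by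
  have hderiv (x : ℝ) : HasDerivAt (fun y => (y - 2) * exp y) ((x - 1) * exp x) x := by
    refine (((hasDerivAt_id x).sub_const 2).fun_mul (hasDerivAt_exp x)).congr_deriv ?_
    simp only [id]
    ring
  rw [cohnIntegral, integral_eq_sub_of_hasDerivAt (fun x _ => by simpa using hderiv x)
    (by simpa using cohnIntegral.intervalIntegrable 0 1)]
  norm_num
  ring

theorem neg_one_pow_mul_cohnIntegral_self_pos (n : ℕ) : 0 < (-1) ^ n * cohnIntegral n n := by
  rw [cohnIntegral, ← integral_const_mul]
  have hsign (x : ℝ) : (-1) ^ n * (x ^ n * (x - 1) ^ n * exp x) = (x * (1 - x)) ^ n * exp x := by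
    rw [mul_pow, show 1 - x = -1 * (x - 1) by ring, mul_pow]
    ring
  simp_rw [hsign]
  refine intervalIntegral_pos_of_pos_on ((by fun_prop : Continuous _).intervalIntegrable 0 1)
    (fun x hx => ?_) zero_lt_one
  have : 0 < x * (1 - x) := mul_pos hx.1 (by linarith [hx.2])
  positivity

noncomputable def cohnA (n : ℕ) : ℝ := cohnIntegral n n / n !

noncomputable def cohnC (n : ℕ) : ℝ := cohnIntegral n (n + 1) / n !

theorem cohnA_zero : cohnA 0 = exp 1 - 1 := by
  simp [cohnA, cohnIntegral_zero_zero]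

theorem cohnC_zero : cohnC 0 = 2 - exp 1 := by
  simp [cohnC, cohnIntegral_zero_one]

theorem cohnA_succ (n : ℕ) : cohnA (n + 1) = -(2 * cohnC n + cohnA n) := by
  have hJ := cohnIntegral_succ_succ n n
  rw [cohnIntegral_succ_left n n] at hJ
  rw [cohnA, cohnA, cohnC, hJ, factorial_succ, cast_mul]
  field_simp
  push_cast
  ring

theorem cohnC_succ (n : ℕ) : cohnC (n + 1) = cohnC n - (2 * n + 3) * cohnA (n + 1) := by
  have hJ := cohnIntegral_succ_succ n (n + 1)
  have hshift := cohnIntegral_succ_left n (n + 1)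
  rw [cohnA, cohnC, cohnC, factorial_succ, cast_mul]
  field_simp
  push_cast at hJ ⊢
  linear_combination hJ + (n + 1) * hshift

theorem neg_one_pow_mul_cohnA_pos (n : ℕ) : 0 < (-1) ^ n * cohnA n := by
  rw [cohnA, ← mul_div_assoc]
  exact div_pos (neg_one_pow_mul_cohnIntegral_self_pos n) (by positivity)

theorem cohnA_succ_and_cohnC_eq_of_recurrence (a : ℕ → ℕ) (r : ℕ → ℝ)
    (ha3 : ∀ k : ℕ, 1 ≤ k → a (3 * k) = 2 * k)
    (ha : ∀ k : ℕ, 1 ≤ k → a (3 * k - 1) = 1 ∧ a (3 * k + 1) = 1)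
    (hr1 : r 1 = exp 1 - 2) (hr2 : r 2 = exp 1 - 3)
    (hr : ∀ n : ℕ, 1 ≤ n → r (n + 2) = a (n + 2) * r (n + 1) + r n) (n : ℕ) :
    cohnA (n + 1) = r (3 * n + 2) ∧ cohnC n = -r (3 * n + 1) := by
  induction n with
  | zero =>
    rw [cohnA_succ, cohnA_zero, cohnC_zero, hr1, hr2]
    constructor <;> ring
  | succ n ih =>
    have hr3 : r (3 * n + 3) = a (3 * n + 3) * r (3 * n + 2) + r (3 * n + 1) := hr _ (by omega)
    have hr4 : r (3 * n + 4) = a (3 * n + 4) * r (3 * n + 3) + r (3 * n + 2) := hr _ (by omega)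
    have hr5 : r (3 * n + 5) = a (3 * n + 5) * r (3 * n + 4) + r (3 * n + 3) := hr _ (by omega)
    have ha3n : a (3 * n + 3) = 2 * (n + 1) := ha3 (n + 1) (by omega)
    have ha4n : a (3 * n + 4) = 1 := (ha (n + 1) (by omega)).2
    have ha5n : a (3 * n + 5) = 1 := (ha (n + 2) (by omega)).1
    simp only [ha3n, ha4n, ha5n] at hr3 hr4 hr5
    push_cast at hr3 hr4 hr5
    have hC : cohnC (n + 1) = -r (3 * n + 4) := by
      rw [cohnC_succ, ih.2, ih.1]
      linear_combination hr3 + hr4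
    show cohnA (n + 2) = r (3 * n + 5) ∧ cohnC (n + 1) = -r (3 * n + 4)
    refine ⟨?_, hC⟩
    rw [cohnA_succ, hC, ih.1]
    linear_combination hr4 - hr5

theorem stmt14_general (a : ℕ → ℕ) (p q : ℕ → ℤ)
    (ha3 : ∀ k : ℕ, 1 ≤ k → a (3 * k) = 2 * k)
    (ha : ∀ k : ℕ, 1 ≤ k → a (3 * k - 1) = 1 ∧ a (3 * k + 1) = 1)
    (hp1 : p 1 = 2) (hp2 : p 2 = 3) (hq1 : q 1 = 1) (hq2 : q 2 = 1)
    (hrec : ∀ n : ℕ, 3 ≤ n →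
      p n = a n * p (n - 1) + p (n - 2) ∧ q n = a n * q (n - 1) + q (n - 2))
    (k : ℕ) (hk : 1 ≤ k) :
    0 < (-1 : ℝ) ^ k * ((q (3 * k - 1) : ℝ) * Real.exp 1 - (p (3 * k - 1) : ℝ)) := by
  set r : ℕ → ℝ := fun n => q n * exp 1 - p n
  have hr (n : ℕ) (hn : 1 ≤ n) : r (n + 2) = a (n + 2) * r (n + 1) + r n := by
    obtain ⟨hp, hq⟩ := hrec (n + 2) (by omega)
    simp only [r, hp, hq, add_tsub_cancel_right]
    push_cast
    ring
  obtain ⟨n, rfl⟩ : ∃ n, k = n + 1 := ⟨k - 1, by omega⟩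
  have hA := (cohnA_succ_and_cohnC_eq_of_recurrence a r ha3 ha (by simp [r, hp1, hq1])
    (by simp [r, hp2, hq2]) hr n).1
  have hpos := neg_one_pow_mul_cohnA_pos (n + 1)
  rw [hA] at hpos
  rwa [show 3 * (n + 1) - 1 = 3 * n + 2 by omega]

theorem stmt14 (a : ℕ → ℕ) (p q : ℕ → ℤ)
    (ha1 : a 1 = 2)
    (ha3 : ∀ k : ℕ, 1 ≤ k → a (3 * k) = 2 * k)
    (ha : ∀ k : ℕ, 1 ≤ k → a (3 * k - 1) = 1 ∧ a (3 * k + 1) = 1)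
    (hp1 : p 1 = 2) (hp2 : p 2 = 3) (hq1 : q 1 = 1) (hq2 : q 2 = 1)
    (hrec : ∀ n : ℕ, 3 ≤ n →
      p n = a n * p (n - 1) + p (n - 2) ∧ q n = a n * q (n - 1) + q (n - 2))
    (k : ℕ) (hk : 1 ≤ k) :
    0 < (-1 : ℝ) ^ k * ((q (3 * k - 1) : ℝ) * Real.exp 1 - (p (3 * k - 1) : ℝ)) :=
  stmt14_general a p q ha3 ha hp1 hp2 hq1 hq2 hrec k hk
end

section
/- For all natural numbers n, m, the integral ∫₀¹ xⁿ (1-x)ᵐ eˣ dx is of the form a·e + b for some integers a and b. -/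
/-!
Integration by parts gives `∫₀¹ xᵏ⁺¹ eˣ = e - (k + 1) ∫₀¹ xᵏ eˣ`, so by induction every
`∫₀¹ xᵏ eˣ` lies in the additive group `ℤ e + ℤ` generated by `e` and `1`. By linearity the same
holds for `∫₀¹ p(x) eˣ` with `p` any integer polynomial, in particular for `p = Xⁿ (1 - X)ᵐ`.
-/

open intervalIntegral Real Polynomial

lemma mem_closure_exp_one_one_iff {x : ℝ} :
    x ∈ AddSubgroup.closure {exp 1, 1} ↔ ∃ a b : ℤ, x = a * exp 1 + b := by
  simp only [AddSubgroup.mem_closure_pair, zsmul_eq_mul, mul_one, eq_comm]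

lemma integral_pow_succ_mul_exp (a b : ℝ) (k : ℕ) :
    ∫ x in a..b, x ^ (k + 1) * exp x =
      b ^ (k + 1) * exp b - a ^ (k + 1) * exp a - (k + 1) * ∫ x in a..b, x ^ k * exp x := by
  have hu : ∀ x ∈ Set.uIcc a b, HasDerivAt (· ^ (k + 1)) ((k + 1 : ℝ) * x ^ k) x := fun x _ ↦ by
    simpa using hasDerivAt_pow (k + 1) x
  rw [integral_mul_deriv_eq_deriv_mul hu (fun x _ ↦ hasDerivAt_exp x)
    (Continuous.intervalIntegrable (by fun_prop) _ _)
    (Continuous.intervalIntegrable (by fun_prop) _ _)]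
  simp_rw [mul_assoc, integral_const_mul]

lemma integral_pow_mul_exp_mem_closure (k : ℕ) :
    ∫ x in (0 : ℝ)..1, x ^ k * exp x ∈ AddSubgroup.closure {exp 1, 1} := by
  induction k with
  | zero =>
    rw [mem_closure_exp_one_one_iff]
    exact ⟨1, -1, by simp [integral_exp]; ring⟩
  | succ k ih =>
    rw [integral_pow_succ_mul_exp]
    have hsmul := AddSubgroup.zsmul_mem _ ih (k + 1)
    have hexp : exp 1 ∈ AddSubgroup.closure {exp 1, 1} := AddSubgroup.subset_closure (by simp)
    convert AddSubgroup.sub_mem _ hexp hsmul using 1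
    simp [zsmul_eq_mul]

lemma integral_aeval_mul_exp_mem_closure (p : ℤ[X]) :
    ∫ x in (0 : ℝ)..1, aeval x p * exp x ∈ AddSubgroup.closure {exp 1, 1} := by
  induction p using Polynomial.induction_on' with
  | add p q hp hq =>
    simp_rw [map_add, add_mul]
    rw [integral_add (Continuous.intervalIntegrable (by fun_prop) _ _)
      (Continuous.intervalIntegrable (by fun_prop) _ _)]
    exact AddSubgroup.add_mem _ hp hq
  | monomial k a =>
    simp_rw [aeval_monomial, algebraMap_int_eq, eq_intCast, mul_assoc, integral_const_mul,
      ← zsmul_eq_mul]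
    exact AddSubgroup.zsmul_mem _ (integral_pow_mul_exp_mem_closure k) a

theorem stmt16 (n m : ℕ) :
    ∃ a b : ℤ, (∫ x in (0:ℝ)..1, x ^ n * (1 - x) ^ m * Real.exp x) =
      (a : ℝ) * Real.exp 1 + (b : ℝ) := by
  rw [← mem_closure_exp_one_one_iff]
  convert integral_aeval_mul_exp_mem_closure (X ^ n * (1 - X) ^ m) using 4 with x
  simp
end

section
/- e is irrational, as a consequence of the identities I_{k,k} = (−1)ᵏ k! (q_{3k−1} e − p_{3k−1}) with 0 < I_{k,k} ≤ e/4ᵏ and q_{3k−1} → ∞. -/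
open Finset Nat

/-! Fourier's argument: if `e = a / d`, then `d! * (e - ∑_{i ≤ d} 1 / i!)` is an integer, while
the tail of the exponential series puts it strictly between `0` and `(d + 2) / (d + 1)^2 < 1`. -/

theorem irrational_of_forall_dvd_mul_sub_int_mem_Ioo {x : ℝ}
    (h : ∀ d : ℕ, 0 < d → ∃ m : ℕ, d ∣ m ∧ ∃ p : ℤ, (m : ℝ) * x - p ∈ Set.Ioo 0 1) :
    Irrational x := by
  rintro ⟨q, rfl⟩
  obtain ⟨_, ⟨c, rfl⟩, p, hp⟩ := h q.den q.pos
  have hint : ((q.den * c : ℕ) : ℝ) * q - p = ((c * q.num - p : ℤ) : ℝ) := by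
    push_cast
    rw [mul_right_comm, Rat.cast_def, mul_div_cancel₀ _ (by positivity)]
    ring
  rw [hint, Set.mem_Ioo] at hp
  have : 0 < c * q.num - p ∧ c * q.num - p < 1 := by exact_mod_cast hp
  omega

theorem Real.sum_lt_exp_of_pos {x : ℝ} (hx : 0 < x) (n : ℕ) :
    ∑ i ∈ range n, x ^ i / i ! < Real.exp x :=
  calc ∑ i ∈ range n, x ^ i / i ! < ∑ i ∈ range (n + 1), x ^ i / i ! := by
        rw [sum_range_succ]; exact lt_add_of_pos_right _ (by positivity)
    _ ≤ Real.exp x := Real.sum_le_exp_of_nonneg hx.le _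

theorem exists_nat_eq_factorial_mul_sum_inv_factorial (n : ℕ) :
    ∃ p : ℕ, (n ! : ℝ) * ∑ i ∈ range (n + 1), (i ! : ℝ)⁻¹ = p := by
  refine ⟨∑ i ∈ range (n + 1), n ! / i !, ?_⟩
  rw [mul_sum, Nat.cast_sum]
  refine sum_congr rfl fun i hi => ?_
  rw [Nat.cast_div (factorial_dvd_factorial (mem_range_succ_iff.mp hi)) (by positivity),
    div_eq_mul_inv]

theorem factorial_mul_exp_one_sub_sum_inv_factorial_lt_one {n : ℕ} (hn : 1 ≤ n) :
    (n ! : ℝ) * (Real.exp 1 - ∑ i ∈ range (n + 1), (i ! : ℝ)⁻¹) < 1 := by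
  have htail := Real.exp_bound' zero_le_one le_rfl n.succ_pos
  simp only [one_pow, one_div, one_mul] at htail
  have hn' : (1 : ℝ) ≤ n := by exact_mod_cast hn
  calc (n ! : ℝ) * (Real.exp 1 - ∑ i ∈ range (n + 1), (i ! : ℝ)⁻¹)
      ≤ n ! * (((n + 1 : ℕ) + 1) / ((n + 1) ! * (n + 1 : ℕ))) := by gcongr; linarith
    _ = (n + 2) / (n + 1) ^ 2 := by
        rw [factorial_succ]; push_cast; field_simp; ring
    _ < 1 := by rw [div_lt_one (by positivity)]; nlinarith

theorem stmt18 : Irrational (Real.exp 1) := by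
  refine irrational_of_forall_dvd_mul_sub_int_mem_Ioo fun d hd => ?_
  obtain ⟨p, hp⟩ := exists_nat_eq_factorial_mul_sum_inv_factorial d
  have hsum : ∑ i ∈ range (d + 1), (i ! : ℝ)⁻¹ < Real.exp 1 := by
    simpa using Real.sum_lt_exp_of_pos one_pos (d + 1)
  refine ⟨d !, dvd_factorial hd le_rfl, p, ?_⟩
  rw [Int.cast_natCast, ← hp, ← mul_sub]
  exact ⟨mul_pos (by positivity) (sub_pos.mpr hsum),
    factorial_mul_exp_one_sub_sum_inv_factorial_lt_one hd⟩
end
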